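/- Let n ≥ 2 be an integer and let X = (ℝ ∪ {∞}) × S¹ be the product of the one-point compactification of ℝ and the circle ℝ/ℤ. Let k be a homeomorphism of S¹ and let f, h be homeomorphisms of X satisfying f(x, θ) = (x + 1, θ) and h(x, θ) = (n·x, k(θ)) for all x ∈ ℝ and θ ∈ S¹ (so f(∞, θ) = (∞, θ) and h(∞, θ) = (∞, k(θ))). Then h ∘ f ∘ h⁻¹ = fⁿ, and the group homomorphism from BS(1,n) = ⟨a, b | a b a⁻¹ = bⁿ⟩ to the homeomorphism group of X sending a ↦ h and b ↦ f is injective; in particular the subgroup of Homeo(X) generated by f and h is isomorphic to BS(1,n). -/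

import Mathlib

open OnePoint

/-- The group of self-homeomorphisms of a topological space, under composition:
`(a * b) x = a (b x)`. -/
instance homeomorphGroup {X : Type*} [TopologicalSpace X] : Group (X ≃ₜ X) where
  mul a b := b.trans a
  one := Homeomorph.refl X
  inv := Homeomorph.symm
  mul_assoc _ _ _ := rfl
  one_mul _ := rfl
  mul_one _ := rfl
  inv_mul_cancel a := Homeomorph.ext fun x => a.symm_apply_apply x

/-- The relator set of the Baumslag–Solitar group `BS(1,n) = ⟨a, b | a b a⁻¹ = bⁿ⟩`,
with `a` the generator `0` and `b` the generator `1`. -/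
def bsRels (n : ℕ) : Set (FreeGroup (Fin 2)) :=
  {FreeGroup.of 0 * FreeGroup.of 1 * (FreeGroup.of 0)⁻¹ * (FreeGroup.of 1 ^ n)⁻¹}

/-- The space `(ℝ ∪ {∞}) × S¹`: the product of the one-point compactification of `ℝ`
and the circle `ℝ/ℤ`. -/
abbrev CylSpace : Type := OnePoint ℝ × AddCircle (1 : ℝ)

/-! Projecting `(ℝ ∪ {∞}) × S¹` to its first factor semiconjugates the action of `⟨f, h⟩` to the
affine action `a ↦ (x ↦ n x)`, `b ↦ (x ↦ x + 1)` of `BS(1,n)` on `ℝ ∪ {∞}`, so it suffices that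
this affine action is faithful. Every element of `BS(1,n)` can be written `a⁻ᵖ bᵐ a^q`, which
acts on `ℝ` by `x ↦ (n^q x + m) / nᵖ`; evaluating at `0` and `1` shows it is the identity only
if `m = 0` and `nᵖ = n^q`, i.e. `p = q` since `n ≥ 2`. -/

open Function

section Semiconj

variable {G X Y : Type*} [Group G] {φ : G →* Equiv.Perm X} {ψ : G →* Equiv.Perm Y} {π : X → Y}

theorem MonoidHom.semiconj_of_closure_eq_top {s : Set G} (hs : Subgroup.closure s = ⊤)
    (hgen : ∀ g ∈ s, Semiconj π (φ g) (ψ g)) (g : G) : Semiconj π (φ g) (ψ g) := by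
  induction (hs ▸ Subgroup.mem_top g : g ∈ Subgroup.closure s) using Subgroup.closure_induction with
  | mem g hg => exact hgen g hg
  | one => simpa using Semiconj.id_right
  | mul g₁ g₂ _ _ h₁ h₂ => simpa only [map_mul, Equiv.Perm.coe_mul] using h₁.comp_right h₂
  | inv g _ h =>
    rw [map_inv, map_inv]
    exact h.inverses_right (φ g).apply_symm_apply (ψ g).symm_apply_apply

theorem MonoidHom.injective_of_semiconj (hπ : Surjective π) (hψ : Injective ψ)
    (h : ∀ g, Semiconj π (φ g) (ψ g)) : Injective φ := by
  refine (injective_iff_map_eq_one φ).mpr fun g hg => (injective_iff_map_eq_one ψ).mp hψ g ?_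
  ext y
  obtain ⟨x, rfl⟩ := hπ y
  simpa [hg] using (h g x).symm

end Semiconj

theorem Function.Semiconj.prodMap {α β γ δ : Type*} {f : α → β} {ga : α → α} {gb : β → β}
    {f' : γ → δ} {ga' : γ → γ} {gb' : δ → δ} (h : Semiconj f ga gb) (h' : Semiconj f' ga' gb') :
    Semiconj (Prod.map f f') (Prod.map ga ga') (Prod.map gb gb') :=
  fun p => Prod.ext (h p.1) (h' p.2)

def Homeomorph.toPermHom (X : Type*) [TopologicalSpace X] : (X ≃ₜ X) →* Equiv.Perm X where
  toFun := Homeomorph.toEquiv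
  map_one' := rfl
  map_mul' _ _ := rfl

section Homeomorph

variable {X : Type*} [TopologicalSpace X]

theorem Homeomorph.coe_pow (f : X ≃ₜ X) (m : ℕ) : ⇑(f ^ m) = (⇑f)^[m] :=
  congrArg DFunLike.coe (map_pow (Homeomorph.toPermHom X) f m)

theorem Homeomorph.mul_mul_inv_eq_pow {f g : X ≃ₜ X} {m : ℕ} (h : Semiconj g f (⇑f)^[m]) :
    g * f * g⁻¹ = f ^ m :=
  mul_inv_eq_iff_eq_mul.mpr <| Homeomorph.ext fun p => by simpa [Homeomorph.coe_pow] using h p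

end Homeomorph

def OnePoint.permHom (X : Type*) : Equiv.Perm X →* Equiv.Perm (OnePoint X) where
  toFun := Equiv.optionCongr
  map_one' := Equiv.optionCongr_refl
  map_mul' e₁ e₂ := Equiv.optionCongr_trans e₂ e₁

theorem OnePoint.permHom_injective (X : Type*) : Injective (OnePoint.permHom X) :=
  Equiv.optionCongr_injective

theorem OnePoint.eq_prodMap_permHom {X Z : Type*} {g : OnePoint X × Z → OnePoint X × Z}
    {σ : Equiv.Perm X} {τ : Z → Z} (hfin : ∀ (x : X) z, g (↑x, z) = (↑(σ x), τ z))
    (hinf : ∀ z, g (∞, z) = (∞, τ z)) : g = Prod.map (OnePoint.permHom X σ) τ := by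
  funext ⟨u, z⟩
  induction u using OnePoint.rec with
  | infty => exact hinf z
  | coe x => exact hfin x z

namespace BaumslagSolitar

variable {n : ℕ}

local notation "𝒂" => (PresentedGroup.of 0 : PresentedGroup (bsRels n))
local notation "𝒃" => (PresentedGroup.of 1 : PresentedGroup (bsRels n))

section Lift

variable {H : Type*} [Group H] {x y : H}

theorem lift_bsRels_eq_one (hxy : x * y * x⁻¹ = y ^ n) :
    ∀ r ∈ bsRels n, FreeGroup.lift ![x, y] r = 1 := by
  rintro r rfl
  simp [hxy]

def lift (hxy : x * y * x⁻¹ = y ^ n) : PresentedGroup (bsRels n) →* H :=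
  PresentedGroup.toGroup (lift_bsRels_eq_one hxy)

variable (hxy : x * y * x⁻¹ = y ^ n)

@[simp]
theorem lift_of_zero : lift hxy 𝒂 = x := PresentedGroup.toGroup.of _

@[simp]
theorem lift_of_one : lift hxy 𝒃 = y := PresentedGroup.toGroup.of _

theorem range_lift : (lift hxy).range = Subgroup.closure {x, y} := by
  rw [MonoidHom.range_eq_map, ← PresentedGroup.closure_range_of, MonoidHom.map_closure,
    ← Set.range_comp]
  congr 1
  ext z
  simp [Fin.exists_fin_two, eq_comm]

end Lift

theorem semiconjBy_of_zero_of_one : SemiconjBy 𝒂 𝒃 (𝒃 ^ n) := by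
  have hrel : PresentedGroup.mk (bsRels n)
      (FreeGroup.of 0 * FreeGroup.of 1 * (FreeGroup.of 0)⁻¹ * (FreeGroup.of 1 ^ n)⁻¹) = 1 :=
    (QuotientGroup.eq_one_iff _).mpr (Subgroup.subset_normalClosure rfl)
  simp only [map_mul, map_inv, map_pow] at hrel
  exact mul_inv_eq_iff_eq_mul.mp (mul_inv_eq_one.mp hrel)

theorem semiconj_map_of_zero_of_one {α : Type*} (ψ : PresentedGroup (bsRels n) →* Equiv.Perm α) :
    Semiconj (ψ 𝒂) (ψ 𝒃) (ψ 𝒃)^[n] := by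
  have := congrArg DFunLike.coe (semiconjBy_of_zero_of_one.map ψ).eq
  rw [map_pow, Equiv.Perm.coe_mul, Equiv.Perm.coe_mul, Equiv.Perm.coe_pow] at this
  exact congrFun this

theorem of_zero_pow_mul_of_one_zpow (q : ℕ) (m : ℤ) :
    𝒂 ^ q * 𝒃 ^ m = 𝒃 ^ ((n : ℤ) ^ q * m) * 𝒂 ^ q := by
  induction q generalizing m with
  | zero => simp
  | succ q ih =>
    have hconj : 𝒂 * 𝒃 ^ m = 𝒃 ^ ((n : ℤ) * m) * 𝒂 := by
      rw [zpow_mul, zpow_natCast]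
      exact (semiconjBy_of_zero_of_one.zpow_right m).eq
    calc 𝒂 ^ (q + 1) * 𝒃 ^ m = 𝒂 ^ q * (𝒂 * 𝒃 ^ m) := by group
      _ = 𝒃 ^ ((n : ℤ) ^ q * (n * m)) * 𝒂 ^ (q + 1) := by rw [hconj, ← mul_assoc, ih]; group
      _ = 𝒃 ^ ((n : ℤ) ^ (q + 1) * m) * 𝒂 ^ (q + 1) := by ring_nf

theorem exists_pow_mul_eq_zpow_mul_pow (w : PresentedGroup (bsRels n)) :
    ∃ (p q : ℕ) (m : ℤ), 𝒂 ^ p * w = 𝒃 ^ m * 𝒂 ^ q := by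
  have hw : w ∈ Subgroup.closure (Set.range PresentedGroup.of) := by simp
  induction hw using Subgroup.closure_induction_right with
  | one => exact ⟨0, 0, 0, by simp⟩
  | mul_right w _ _ hi ih =>
    obtain ⟨i, rfl⟩ := hi
    obtain ⟨p, q, m, h⟩ := ih
    obtain rfl | rfl : i = 0 ∨ i = 1 := by omega
    · exact ⟨p, q + 1, m, by rw [← mul_assoc, h, mul_assoc, ← pow_succ]⟩
    · refine ⟨p, q, m + (n : ℤ) ^ q, ?_⟩
      calc 𝒂 ^ p * (w * 𝒃) = 𝒃 ^ m * (𝒂 ^ q * 𝒃 ^ (1 : ℤ)) := by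
            rw [← mul_assoc, h, zpow_one, mul_assoc]
        _ = 𝒃 ^ (m + (n : ℤ) ^ q) * 𝒂 ^ q := by
            rw [of_zero_pow_mul_of_one_zpow, mul_one, zpow_add, mul_assoc]
  | mul_inv_cancel w _ _ hi ih =>
    obtain ⟨i, rfl⟩ := hi
    obtain ⟨p, q, m, h⟩ := ih
    obtain rfl | rfl : i = 0 ∨ i = 1 := by omega
    · cases q with
      | zero =>
        refine ⟨p + 1, 0, n * m, ?_⟩
        calc 𝒂 ^ (p + 1) * (w * 𝒂⁻¹) = 𝒂 ^ 1 * 𝒃 ^ m * 𝒂⁻¹ := by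
              rw [pow_succ', mul_assoc, ← mul_assoc _ w, h, pow_zero, mul_one, pow_one, mul_assoc]
          _ = 𝒃 ^ ((n : ℤ) * m) * 𝒂 ^ 0 := by
              rw [of_zero_pow_mul_of_one_zpow, pow_one, pow_one]; group
      | succ q =>
        exact ⟨p, q, m, by rw [← mul_assoc, h, pow_succ, mul_assoc, mul_inv_cancel_right]⟩
    · refine ⟨p, q, m - (n : ℤ) ^ q, ?_⟩
      calc 𝒂 ^ p * (w * 𝒃⁻¹) = 𝒃 ^ m * (𝒂 ^ q * 𝒃 ^ (-1 : ℤ)) := by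
            rw [← mul_assoc, h, zpow_neg_one, mul_assoc]
        _ = 𝒃 ^ (m - (n : ℤ) ^ q) * 𝒂 ^ q := by
            rw [of_zero_pow_mul_of_one_zpow, sub_eq_add_neg, zpow_add, mul_neg_one, mul_assoc]

noncomputable def affineRep (hn : n ≠ 0) : PresentedGroup (bsRels n) →* Equiv.Perm ℝ :=
  lift (x := MulAction.toPermHom ℝˣ ℝ (Units.mk0 (n : ℝ) (Nat.cast_ne_zero.mpr hn)))
    (y := Equiv.addRight 1) (by ext; simp)

theorem affineRep_of_zero_pow_apply (hn : n ≠ 0) (q : ℕ) (x : ℝ) :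
    affineRep hn (𝒂 ^ q) x = n ^ q * x := by
  rw [affineRep, map_pow, lift_of_zero, ← map_pow]
  simp [Units.smul_def]

theorem affineRep_of_one_zpow_apply (hn : n ≠ 0) (m : ℤ) (x : ℝ) :
    affineRep hn (𝒃 ^ m) x = x + m := by
  simp [affineRep]

theorem affineRep_injective (hn : 2 ≤ n) : Injective (affineRep (n := n) (by omega)) := by
  refine (injective_iff_map_eq_one _).mpr fun w hw => ?_
  obtain ⟨p, q, m, h⟩ := exists_pow_mul_eq_zpow_mul_pow w
  have hψ (x : ℝ) : (n : ℝ) ^ p * x = n ^ q * x + m := by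
    have := congrArg (fun w => affineRep (by omega) w x) h
    simp only [map_mul, hw, mul_one, Equiv.Perm.mul_apply] at this
    rwa [affineRep_of_zero_pow_apply, affineRep_of_one_zpow_apply,
      affineRep_of_zero_pow_apply] at this
  have hm : m = 0 := by exact_mod_cast by simpa using (hψ 0).symm
  have hpq : p = q := Nat.pow_right_injective hn <| by
    exact_mod_cast (by simpa [hm] using hψ 1 : (n : ℝ) ^ p = n ^ q)
  rwa [hm, hpq, zpow_zero, one_mul, mul_eq_left] at h

theorem injective_lift_of_eq_prodMap {X Z : Type*} [TopologicalSpace X] [TopologicalSpace Z]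
    [Nonempty Z] {f h : X × Z ≃ₜ X × Z} (hconj : h * f * h⁻¹ = f ^ n)
    {ψ : PresentedGroup (bsRels n) →* Equiv.Perm X} (hψ : Injective ψ) {σ τ : Z → Z}
    (hf : ⇑f = Prod.map (ψ 𝒃) τ) (hh : ⇑h = Prod.map (ψ 𝒂) σ) : Injective (lift hconj) := by
  have hsemi (w : PresentedGroup (bsRels n)) :
      Semiconj Prod.fst ((Homeomorph.toPermHom _).comp (lift hconj) w) (ψ w) := by
    refine MonoidHom.semiconj_of_closure_eq_top (PresentedGroup.closure_range_of _) ?_ w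
    rintro _ ⟨i, rfl⟩
    obtain rfl | rfl : i = 0 ∨ i = 1 := by omega
    · change Semiconj _ h _
      rw [hh]
      exact fun _ => rfl
    · change Semiconj _ f _
      rw [hf]
      exact fun _ => rfl
  exact Injective.of_comp (f := Homeomorph.toPermHom _)
    (MonoidHom.injective_of_semiconj Prod.fst_surjective hψ hsemi)

end BaumslagSolitar

open BaumslagSolitar in
/-- for `f(x,θ) = (x+1,θ)` and `h(x,θ) = (nx, k(θ))` on
`(ℝ ∪ {∞}) × S¹`, we have `h ∘ f ∘ h⁻¹ = fⁿ` and the homomorphism from `BS(1,n)`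
sending `a ↦ h`, `b ↦ f` is injective with range the subgroup generated by `f` and
`h`; in particular that subgroup is isomorphic to `BS(1,n)`. -/
theorem bs_product_action_is_faithful
    (n : ℕ) (hn : 2 ≤ n)
    (k : AddCircle (1 : ℝ) ≃ₜ AddCircle (1 : ℝ))
    (f h : CylSpace ≃ₜ CylSpace)
    (hf : ∀ (x : ℝ) (θ : AddCircle (1 : ℝ)), f (↑x, θ) = (↑(x + 1), θ))
    (hfinf : ∀ θ : AddCircle (1 : ℝ), f (∞, θ) = (∞, θ))
    (hh : ∀ (x : ℝ) (θ : AddCircle (1 : ℝ)), h (↑x, θ) = (↑((n : ℝ) * x), k θ))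
    (hhinf : ∀ θ : AddCircle (1 : ℝ), h (∞, θ) = (∞, k θ)) :
    (∀ p : CylSpace, h (f (h.symm p)) = (⇑f)^[n] p) ∧
    ∃ φ : PresentedGroup (bsRels n) →* (CylSpace ≃ₜ CylSpace),
      φ (PresentedGroup.of 0) = h ∧ φ (PresentedGroup.of 1) = f ∧
      Function.Injective φ ∧
      φ.range = Subgroup.closure ({f, h} : Set (CylSpace ≃ₜ CylSpace)) := by
  let ψ := (OnePoint.permHom ℝ).comp (affineRep (n := n) (by omega))
  have hψ : Injective ψ := (OnePoint.permHom_injective ℝ).comp (affineRep_injective hn)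
  have hfψ : ⇑f = Prod.map (ψ (PresentedGroup.of 1)) id := by
    simpa [ψ, affineRep, OnePoint.permHom] using OnePoint.eq_prodMap_permHom (τ := id) hf hfinf
  have hhψ : ⇑h = Prod.map (ψ (PresentedGroup.of 0)) k := by
    simpa [ψ, affineRep, OnePoint.permHom] using OnePoint.eq_prodMap_permHom hh hhinf
  have hhf : Semiconj h f (⇑f)^[n] := by
    rw [hfψ, hhψ, Prod.map_iterate, iterate_id]
    exact (semiconj_map_of_zero_of_one ψ).prodMap Semiconj.id_right
  have hconj : h * f * h⁻¹ = f ^ n := Homeomorph.mul_mul_inv_eq_pow hhf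
  refine ⟨fun p => by simpa using hhf (h.symm p), lift hconj, lift_of_zero hconj,
    lift_of_one hconj, injective_lift_of_eq_prodMap hconj hψ hfψ hhψ, ?_⟩
  rw [range_lift, Set.pair_comm]
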